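/- Let n ≥ 1 be an integer, let S be a set of n² points in the unit square U = [0,1]², and let i ≥ 1. Then the number of basic squares R of the grid G_i(U) whose parent R' in G_{i−1}(U) satisfies 'some basic square Q of G_{i−1}(U) contained in TL_{i−1}(R') contains at least 4n points of S' is at most 100n. (Hence at every level of the quadtree built by the protocol, the number of active basic squares is O(n).) -/

import Mathlib

open scoped Classical

/-- The Euclidean plane. -/
abbrev E2 := EuclideanSpace ℝ (Fin 2)

/-- The closed axis-aligned square `[a, a+ℓ] × [b, b+ℓ]`. -/
def square (a b ℓ : ℝ) : Set E2 :=
  {p | p 0 ∈ Set.Icc a (a + ℓ) ∧ p 1 ∈ Set.Icc b (b + ℓ)}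

/-- The closed unit square `U = [0,1]²`. -/
def unitSq : Set E2 := square 0 0 1

/-- The basic square `C(i, j, m) = [j/2^i, (j+1)/2^i] × [m/2^i, (m+1)/2^i]`
of the grid `G_i(U)`. -/
def cell (i j m : ℕ) : Set E2 :=
  square ((j : ℝ) / 2 ^ i) ((m : ℝ) / 2 ^ i) (1 / 2 ^ i)

/-- `TL_i(C(i, j, m))`: the union of all basic squares `C(i, jQ, mQ)` of `G_i(U)`
with `|jQ − j| ≤ 2` and `|mQ − m| ≤ 2`; i.e. the basic square together with the
(up to) two layers of basic squares around it within `U`. -/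
def TLcell (i j m : ℕ) : Set E2 :=
  {p | ∃ jQ mQ : ℕ, jQ < 2 ^ i ∧ mQ < 2 ^ i ∧
    jQ ≤ j + 2 ∧ j ≤ jQ + 2 ∧ mQ ≤ m + 2 ∧ m ≤ mQ + 2 ∧ p ∈ cell i jQ mQ}

/-- For a point `p`, the coordinate `j` of a level-`k` cell containing `p` is pinned
to two values. -/
lemma coord_pin (k : ℕ) (x : ℝ) (j : ℕ)
    (h1 : (j : ℝ) / 2 ^ k ≤ x) (h2 : x ≤ (j : ℝ) / 2 ^ k + 1 / 2 ^ k) :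
    j ≤ Nat.floor (x * 2 ^ k) ∧ Nat.floor (x * 2 ^ k) ≤ j + 1 := by
  have hpow : (0:ℝ) < 2 ^ k := by positivity
  have hjt : (j : ℝ) ≤ x * 2 ^ k := by
    rw [div_le_iff₀ hpow] at h1; linarith
  have htj : x * 2 ^ k ≤ (j : ℝ) + 1 := by
    have h2' : x ≤ ((j : ℝ) + 1) / 2 ^ k := by rw [← add_div] at h2; exact h2
    rw [le_div_iff₀ hpow] at h2'; linarith
  constructor
  · exact Nat.le_floor hjt
  · have : Nat.floor (x * 2 ^ k) ≤ Nat.floor (((j + 1 : ℕ) : ℝ)) := by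
      apply Nat.floor_le_floor
      push_cast
      linarith
    rw [Nat.floor_natCast] at this
    exact this

theorem stmt_11 (n : ℕ) (hn : 1 ≤ n) (S : Finset E2) (hcard : S.card = n ^ 2)
    (hU : ∀ p ∈ S, p ∈ unitSq) (i : ℕ) (hi : 1 ≤ i) :
    (((Finset.range (2 ^ i)) ×ˢ (Finset.range (2 ^ i))).filter
      (fun jm => ∃ jQ mQ : ℕ, jQ < 2 ^ (i-1) ∧ mQ < 2 ^ (i-1) ∧
        jQ ≤ jm.1 / 2 + 2 ∧ jm.1 / 2 ≤ jQ + 2 ∧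
        mQ ≤ jm.2 / 2 + 2 ∧ jm.2 / 2 ≤ mQ + 2 ∧
        4 * n ≤ (S.filter (fun p => p ∈ cell (i-1) jQ mQ)).card)).card ≤ 100 * n := by
  set k := i - 1 with hk
  set Grid := (Finset.range (2 ^ k)) ×ˢ (Finset.range (2 ^ k)) with hGrid
  set Heavy := Grid.filter
    (fun q => 4 * n ≤ (S.filter (fun p => p ∈ cell k q.1 q.2)).card) with hHeavy
  -- Step 1: Heavy has at most n cells
  have hHcard : Heavy.card ≤ n := by
    have h1 : 4 * n * Heavy.card ≤
        ∑ q ∈ Heavy, (S.filter (fun p => p ∈ cell k q.1 q.2)).card := by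
      calc 4 * n * Heavy.card = Heavy.card • (4 * n) := by
            rw [smul_eq_mul, mul_comm]
        _ ≤ ∑ q ∈ Heavy, (S.filter (fun p => p ∈ cell k q.1 q.2)).card :=
            Finset.card_nsmul_le_sum Heavy _ _ (fun q hq => (Finset.mem_filter.mp hq).2)
    have h2 : ∑ q ∈ Heavy, (S.filter (fun p => p ∈ cell k q.1 q.2)).card ≤
        ∑ q ∈ Grid, (S.filter (fun p => p ∈ cell k q.1 q.2)).card :=
      Finset.sum_le_sum_of_subset (Finset.filter_subset _ _)
    have h3 : ∑ q ∈ Grid, (S.filter (fun p => p ∈ cell k q.1 q.2)).card =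
        ∑ p ∈ S, (Grid.filter (fun q => p ∈ cell k q.1 q.2)).card := by
      simp only [Finset.card_filter]
      rw [Finset.sum_comm]
    have h4 : ∀ p ∈ S, (Grid.filter (fun q => p ∈ cell k q.1 q.2)).card ≤ 4 := by
      intro p hp
      set f0 := Nat.floor (p 0 * 2 ^ k) with hf0
      set f1 := Nat.floor (p 1 * 2 ^ k) with hf1
      have hsub : Grid.filter (fun q => p ∈ cell k q.1 q.2) ⊆
          ({f0 - 1, f0} : Finset ℕ) ×ˢ ({f1 - 1, f1} : Finset ℕ) := by
        intro q hq
        obtain ⟨-, hcell⟩ := Finset.mem_filter.mp hq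
        obtain ⟨⟨ha1, ha2⟩, ⟨hb1, hb2⟩⟩ := hcell
        have hc0 := coord_pin k (p 0) q.1 ha1 ha2
        have hc1 := coord_pin k (p 1) q.2 hb1 hb2
        rw [Finset.mem_product]
        constructor <;> simp only [Finset.mem_insert, Finset.mem_singleton] <;> omega
      calc (Grid.filter (fun q => p ∈ cell k q.1 q.2)).card
          ≤ (({f0 - 1, f0} : Finset ℕ) ×ˢ ({f1 - 1, f1} : Finset ℕ)).card :=
            Finset.card_le_card hsub
        _ ≤ 4 := by
            rw [Finset.card_product]
            have c0 : ({f0 - 1, f0} : Finset ℕ).card ≤ 2 :=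
              (Finset.card_insert_le _ _).trans (by simp)
            have c1 : ({f1 - 1, f1} : Finset ℕ).card ≤ 2 :=
              (Finset.card_insert_le _ _).trans (by simp)
            exact Nat.mul_le_mul c0 c1
    have h5 : ∑ p ∈ S, (Grid.filter (fun q => p ∈ cell k q.1 q.2)).card ≤ 4 * n ^ 2 := by
      calc ∑ p ∈ S, (Grid.filter (fun q => p ∈ cell k q.1 q.2)).card
          ≤ ∑ _p ∈ S, 4 := Finset.sum_le_sum h4
        _ = 4 * n ^ 2 := by rw [Finset.sum_const, hcard]; ring
    have : 4 * n * Heavy.card ≤ 4 * n * n := by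
      calc 4 * n * Heavy.card ≤ 4 * n ^ 2 := by
            exact h1.trans (h2.trans (h3 ▸ h5))
        _ = 4 * n * n := by ring
    exact Nat.le_of_mul_le_mul_left this (by positivity)
  -- Step 2: the active set is covered by 100 cells per heavy cell
  set F := ((Finset.range (2 ^ i)) ×ˢ (Finset.range (2 ^ i))).filter
      (fun jm => ∃ jQ mQ : ℕ, jQ < 2 ^ k ∧ mQ < 2 ^ k ∧
        jQ ≤ jm.1 / 2 + 2 ∧ jm.1 / 2 ≤ jQ + 2 ∧
        mQ ≤ jm.2 / 2 + 2 ∧ jm.2 / 2 ≤ mQ + 2 ∧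
        4 * n ≤ (S.filter (fun p => p ∈ cell k jQ mQ)).card) with hF
  have hcover : F ⊆ Heavy.biUnion (fun q =>
      (Finset.Ico (2 * q.1 - 4) (2 * q.1 + 6)) ×ˢ
      (Finset.Ico (2 * q.2 - 4) (2 * q.2 + 6))) := by
    intro jm hjm
    obtain ⟨hmem, jQ, mQ, h1, h2, h3, h4, h5, h6, h7⟩ := Finset.mem_filter.mp hjm
    rw [Finset.mem_biUnion]
    refine ⟨(jQ, mQ), ?_, ?_⟩
    · rw [hHeavy, Finset.mem_filter, hGrid, Finset.mem_product]
      exact ⟨⟨Finset.mem_range.mpr h1, Finset.mem_range.mpr h2⟩, h7⟩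
    · rw [Finset.mem_product, Finset.mem_Ico, Finset.mem_Ico]
      omega
  calc F.card ≤ (Heavy.biUnion (fun q =>
        (Finset.Ico (2 * q.1 - 4) (2 * q.1 + 6)) ×ˢ
        (Finset.Ico (2 * q.2 - 4) (2 * q.2 + 6)))).card := Finset.card_le_card hcover
    _ ≤ ∑ q ∈ Heavy, ((Finset.Ico (2 * q.1 - 4) (2 * q.1 + 6)) ×ˢ
        (Finset.Ico (2 * q.2 - 4) (2 * q.2 + 6))).card := Finset.card_biUnion_le
    _ ≤ ∑ _q ∈ Heavy, 100 := by
        apply Finset.sum_le_sum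
        intro q _
        rw [Finset.card_product, Nat.card_Ico, Nat.card_Ico]
        have a : 2 * q.1 + 6 - (2 * q.1 - 4) ≤ 10 := by omega
        have b : 2 * q.2 + 6 - (2 * q.2 - 4) ≤ 10 := by omega
        calc _ ≤ 10 * 10 := Nat.mul_le_mul a b
          _ = 100 := rfl
    _ = 100 * Heavy.card := by rw [Finset.sum_const, smul_eq_mul, mul_comm]
    _ ≤ 100 * n := Nat.mul_le_mul_left _ hHcard
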